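/- arXiv:1705.10231 — 8 statements merged into one kernel-verified Lean document; each statement's English description precedes it below -/
import Mathlib

section
/- For any two connected graphs G₁ and G₂, the total dominator chromatic number of the neighbourhood corona G₁ ⋆ G₂ is at most |V(G₁)| + |V(G₂)|. -/
open SimpleGraph

/-- A total dominator coloring with `k` colors: a proper coloring in which every
vertex is adjacent to all vertices of some nonempty color class. -/
def IsTDColoring {V : Type*} (G : SimpleGraph V) {k : ℕ} (c : V → Fin k) : Prop :=
  (∀ u v, G.Adj u v → c u ≠ c v) ∧
  ∀ v : V, ∃ i : Fin k, (∃ w, c w = i) ∧ ∀ w, c w = i → G.Adj v w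

/-- The total dominator chromatic number. -/
noncomputable def tdChromatic {V : Type*} (G : SimpleGraph V) : ℕ :=
  sInf {k | ∃ c : V → Fin k, IsTDColoring G c}

/-- TDC-stability: minimum number of vertices whose removal changes the TDC-number. -/
noncomputable def tdStability {V : Type*} [Fintype V] (G : SimpleGraph V) : ℕ :=
  sInf {k | ∃ S : Finset V, S.card = k ∧ 0 < k ∧
    tdChromatic (G.induce {v | v ∉ S}) ≠ tdChromatic G}

/-- TDC-bondage number: minimum number of edges whose removal changes the TDC-number. -/
noncomputable def tdBondage {V : Type*} [Fintype V] (G : SimpleGraph V) : ℕ :=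
  sInf {k | ∃ F : Finset (Sym2 V), ↑F ⊆ G.edgeSet ∧ F.card = k ∧ 0 < k ∧
    tdChromatic (G.deleteEdges ↑F) ≠ tdChromatic G}

/-- The neighbourhood corona `G₁ ⋆ G₂`. -/
def ncorona {V₁ V₂ : Type*} (G₁ : SimpleGraph V₁) (G₂ : SimpleGraph V₂) :
    SimpleGraph (V₁ ⊕ V₁ × V₂) :=
  SimpleGraph.fromRel (fun u v =>
    match u, v with
    | .inl u, .inl v => G₁.Adj u v
    | .inl u, .inr (i, _) => G₁.Adj u i
    | .inr (i, w), .inr (j, x) => i = j ∧ G₂.Adj w x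
    | .inr _, .inl _ => False)

/-- The friendship graph `F n`: `n` triangles sharing the common vertex `none`. -/
def friendshipGraph (n : ℕ) : SimpleGraph (Option (Fin n × Fin 2)) :=
  SimpleGraph.fromRel (fun u v => u = none ∨ u.map Prod.fst = v.map Prod.fst)

/-- The `r`-gluing of `G₁` and `G₂` along cliques `f₁ '' univ` and `f₂ '' univ`. -/
def rGlue {V₁ V₂ : Type*} (G₁ : SimpleGraph V₁) (G₂ : SimpleGraph V₂)
    {r : ℕ} (f₁ : Fin r → V₁) (f₂ : Fin r → V₂) :
    SimpleGraph (V₁ ⊕ {w : V₂ // w ∉ Set.range f₂}) :=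
  SimpleGraph.fromRel (fun u v =>
    match u, v with
    | .inl u, .inl v => G₁.Adj u v
    | .inl u, .inr w => ∃ i, f₁ i = u ∧ G₂.Adj (f₂ i) w.1
    | .inr w, .inr x => G₂.Adj w.1 x.1
    | .inr _, .inl _ => False)


private lemma conn_exists_adj {V : Type*} [Fintype V] {G : SimpleGraph V}
    (h : G.Connected) (hc : 1 < Fintype.card V) (u : V) : ∃ v, G.Adj u v := by
  obtain ⟨v, hv⟩ := Fintype.exists_ne_of_one_lt_card hc u
  obtain ⟨p⟩ := h.preconnected u v
  cases p with
  | nil => exact absurd rfl hv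
  | cons h' _ => exact ⟨_, h'⟩

theorem tdChromatic_ncorona_le_card {V₁ V₂ : Type*} [Fintype V₁] [Fintype V₂]
    (G₁ : SimpleGraph V₁) (G₂ : SimpleGraph V₂)
    (h₁ : G₁.Connected) (h₂ : G₂.Connected) :
    tdChromatic (ncorona G₁ G₂) ≤ Fintype.card V₁ + Fintype.card V₂ := by
  by_cases hc : 1 < Fintype.card V₁
  · set n₁ := Fintype.card V₁ with hn₁
    set n₂ := Fintype.card V₂ with hn₂
    let e₁ := Fintype.equivFin V₁
    let e₂ := Fintype.equivFin V₂
    let c : V₁ ⊕ V₁ × V₂ → Fin (n₁ + n₂) := fun x =>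
      match x with
      | .inl u => Fin.castAdd n₂ (e₁ u)
      | .inr (_, w) => Fin.natAdd n₁ (e₂ w)
    apply Nat.sInf_le
    refine ⟨c, ?_, ?_⟩
    · rintro (u | ⟨i, w⟩) (v | ⟨j, x⟩) huv <;>
        rw [ncorona, SimpleGraph.fromRel_adj] at huv <;>
        obtain ⟨hne, hr⟩ := huv
      · have huv' : u ≠ v := fun h => hne (by rw [h])
        intro h
        simp only [c, Fin.ext_iff, Fin.coe_castAdd] at h
        exact huv' (e₁.injective (Fin.ext h))
      · intro h
        simp only [c, Fin.ext_iff, Fin.coe_castAdd, Fin.coe_natAdd] at h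
        have := (e₁ u).isLt
        omega
      · intro h
        simp only [c, Fin.ext_iff, Fin.coe_castAdd, Fin.coe_natAdd] at h
        have := (e₁ v).isLt
        omega
      · have hwx : w ≠ x := by
          rcases hr with ⟨_, h⟩ | ⟨_, h⟩
          · exact h.ne
          · exact h.ne'
        intro h
        simp only [c, Fin.ext_iff, Fin.coe_natAdd] at h
        exact hwx (e₂.injective (Fin.ext (by omega)))
    · rintro (u | ⟨i, w⟩)
      · obtain ⟨v', hadj⟩ := conn_exists_adj h₁ hc u
        refine ⟨Fin.castAdd n₂ (e₁ v'), ⟨Sum.inl v', rfl⟩, ?_⟩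
        rintro (x | ⟨j, y⟩) hx
        · simp only [c, Fin.ext_iff, Fin.coe_castAdd] at hx
          have hxv : x = v' := e₁.injective (Fin.ext hx)
          subst hxv
          rw [ncorona, SimpleGraph.fromRel_adj]
          exact ⟨by simp [hadj.ne], Or.inl hadj⟩
        · exfalso
          simp only [c, Fin.ext_iff, Fin.coe_castAdd, Fin.coe_natAdd] at hx
          have := (e₁ v').isLt
          omega
      · obtain ⟨v', hadj⟩ := conn_exists_adj h₁ hc i
        refine ⟨Fin.castAdd n₂ (e₁ v'), ⟨Sum.inl v', rfl⟩, ?_⟩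
        rintro (x | ⟨j, y⟩) hx
        · simp only [c, Fin.ext_iff, Fin.coe_castAdd] at hx
          have hxv : x = v' := e₁.injective (Fin.ext hx)
          subst hxv
          rw [ncorona, SimpleGraph.fromRel_adj]
          exact ⟨by simp, Or.inr hadj.symm⟩
        · exfalso
          simp only [c, Fin.ext_iff, Fin.coe_castAdd, Fin.coe_natAdd] at hx
          have := (e₁ v').isLt
          omega
  · -- |V₁| = 1 : the central vertex is isolated, so no TD-coloring exists
    have hpos : 0 < Fintype.card V₁ := Fintype.card_pos_iff.mpr h₁.nonempty
    have hone : Fintype.card V₁ ≤ 1 := by omega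
    have hsub : Subsingleton V₁ := Fintype.card_le_one_iff_subsingleton.mp hone
    have : {k | ∃ c : V₁ ⊕ V₁ × V₂ → Fin k, IsTDColoring (ncorona G₁ G₂) c} = ∅ := by
      ext k
      simp only [Set.mem_setOf_eq, Set.mem_empty_iff_false, iff_false, not_exists]
      rintro c ⟨_, hdom⟩
      obtain ⟨u⟩ := h₁.nonempty
      obtain ⟨i, ⟨w, hw⟩, hadj⟩ := hdom (Sum.inl u)
      have := hadj w hw
      rw [ncorona, SimpleGraph.fromRel_adj] at this
      obtain ⟨hne, hr⟩ := this
      match w with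
      | .inl v => exact hne (by rw [Subsingleton.elim u v])
      | .inr (j, y) =>
        rcases hr with h | h
        · exact G₁.irrefl (by rwa [Subsingleton.elim j u] at h)
        · exact h
    rw [tdChromatic, this, Nat.sInf_empty]
    exact Nat.zero_le _
end

section
/- For any two connected graphs G₁ and G₂, χ_d^t(G₁ ⋆ G₂) ≤ χ_d^t(G₁) + |V(G₂)|. -/
open SimpleGraph

lemma ncorona_adj_inl_inl {V₁ V₂ : Type*} (G₁ : SimpleGraph V₁) (G₂ : SimpleGraph V₂)
    (u v : V₁) : (ncorona G₁ G₂).Adj (.inl u) (.inl v) ↔ G₁.Adj u v := by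
  simp only [ncorona, fromRel_adj, Sum.inl.injEq, ne_eq]
  constructor
  · rintro ⟨h, h1 | h1⟩
    · exact h1
    · exact h1.symm
  · exact fun h => ⟨h.ne, Or.inl h⟩

lemma ncorona_adj_inl_inr {V₁ V₂ : Type*} (G₁ : SimpleGraph V₁) (G₂ : SimpleGraph V₂)
    (u : V₁) (p : V₁ × V₂) : (ncorona G₁ G₂).Adj (.inl u) (.inr p) ↔ G₁.Adj u p.1 := by
  simp only [ncorona, fromRel_adj, ne_eq]
  constructor
  · rintro ⟨h, h1 | h1⟩
    · exact h1
    · exact h1.elim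
  · exact fun h => ⟨by simp, Or.inl h⟩

lemma ncorona_adj_inr_inr {V₁ V₂ : Type*} (G₁ : SimpleGraph V₁) (G₂ : SimpleGraph V₂)
    (p q : V₁ × V₂) : (ncorona G₁ G₂).Adj (.inr p) (.inr q) ↔ p.1 = q.1 ∧ G₂.Adj p.2 q.2 := by
  simp only [ncorona, fromRel_adj, ne_eq, Sum.inr.injEq]
  constructor
  · rintro ⟨h, ⟨h1, h2⟩ | ⟨h1, h2⟩⟩
    · exact ⟨h1, h2⟩
    · exact ⟨h1.symm, h2.symm⟩
  · rintro ⟨h1, h2⟩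
    refine ⟨?_, Or.inl ⟨h1, h2⟩⟩
    intro he
    exact h2.ne (by rw [he])

lemma exists_tdc_ncorona {V₁ V₂ : Type*} [Fintype V₂] (G₁ : SimpleGraph V₁)
    (G₂ : SimpleGraph V₂) {k : ℕ} (c : V₁ → Fin k) (hc : IsTDColoring G₁ c) :
    ∃ c' : (V₁ ⊕ V₁ × V₂) → Fin (k + Fintype.card V₂),
      IsTDColoring (ncorona G₁ G₂) c' := by
  classical
  set n := Fintype.card V₂
  let e : V₂ ≃ Fin n := Fintype.equivFin V₂
  refine ⟨Sum.elim (fun v => Fin.castAdd n (c v)) (fun p => Fin.natAdd k (e p.2)), ?_, ?_⟩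
  · rintro (u | p) (v | q) hadj <;> simp only [Sum.elim_inl, Sum.elim_inr]
    · rw [ncorona_adj_inl_inl] at hadj
      intro h
      exact hc.1 u v hadj (by ext; simpa [Fin.ext_iff] using h)
    · intro h
      have := congrArg Fin.val h
      simp [Fin.ext_iff] at this
      omega
    · intro h
      have := congrArg Fin.val h
      simp [Fin.ext_iff] at this
      omega
    · rw [ncorona_adj_inr_inr] at hadj
      intro h
      have h2 : p.2 ≠ q.2 := hadj.2.ne
      have : e p.2 = e q.2 := by
        have := congrArg Fin.val h
        simp [Fin.ext_iff] at this
        exact Fin.ext this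
      exact h2 (e.injective this)
  · rintro (v | p)
    · obtain ⟨i, ⟨w, hw⟩, hdom⟩ := hc.2 v
      refine ⟨Fin.castAdd n i, ⟨Sum.inl w, by simp [hw]⟩, ?_⟩
      rintro (u | q) h <;> simp only [Sum.elim_inl, Sum.elim_inr] at h
      · rw [ncorona_adj_inl_inl]
        exact hdom u (by ext; simpa [Fin.ext_iff] using h)
      · exfalso
        have := congrArg Fin.val h
        simp [Fin.ext_iff] at this
        omega
    · obtain ⟨i, ⟨w, hw⟩, hdom⟩ := hc.2 p.1
      refine ⟨Fin.castAdd n i, ⟨Sum.inl w, by simp [hw]⟩, ?_⟩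
      rintro (u | q) h <;> simp only [Sum.elim_inl, Sum.elim_inr] at h
      · exact ((ncorona_adj_inl_inr G₁ G₂ u p).2
          ((hdom u (by ext; simpa [Fin.ext_iff] using h)).symm)).symm
      · exfalso
        have := congrArg Fin.val h
        simp [Fin.ext_iff] at this
        omega

lemma exists_tdc_base {V₁ V₂ : Type*} (G₁ : SimpleGraph V₁) (G₂ : SimpleGraph V₂)
    {m : ℕ} (c : (V₁ ⊕ V₁ × V₂) → Fin m) (hc : IsTDColoring (ncorona G₁ G₂) c) :
    ∃ d : V₁ → Fin (m + m), IsTDColoring G₁ d := by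
  classical
  -- representative for "bad" colors (used by some inr vertex)
  let rep : Fin m → Option V₁ := fun i =>
    if h : ∃ p : V₁ × V₂, c (.inr p) = i then some h.choose.1 else none
  let Sel : V₁ → Prop := fun v => ∃ i, rep i = some v
  let d : V₁ → Fin (m + m) := fun v =>
    if h : Sel v then Fin.natAdd m h.choose else Fin.castAdd m (c (.inl v))
  have hd_sel : ∀ v (h : Sel v), d v = Fin.natAdd m h.choose := by
    intro v h; simp only [d, dif_pos h]
  have hd_not : ∀ v (h : ¬ Sel v), d v = Fin.castAdd m (c (.inl v)) := by
    intro v h; simp only [d, dif_neg h]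
  -- a selected vertex's color class is a singleton
  have hsingle : ∀ v (h : Sel v), ∀ u, d u = d v → u = v := by
    intro v h u hu
    rw [hd_sel v h] at hu
    by_cases h' : Sel u
    · rw [hd_sel u h'] at hu
      have : h'.choose = h.choose := by
        have := congrArg Fin.val hu
        simp [Fin.ext_iff] at this
        exact Fin.ext this
      have h1 := h'.choose_spec
      have h2 := h.choose_spec
      rw [this, h2] at h1
      exact (Option.some_injective _ h1).symm
    · rw [hd_not u h'] at hu
      exfalso
      have := congrArg Fin.val hu
      simp at this
      omega
  refine ⟨d, ?_, ?_⟩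
  · intro u v huv heq
    by_cases hu : Sel u <;> by_cases hv : Sel v
    · exact huv.ne (hsingle v hv u heq)
    · rw [hd_sel u hu, hd_not v hv] at heq
      have := congrArg Fin.val heq; simp at this; omega
    · rw [hd_not u hu, hd_sel v hv] at heq
      have := congrArg Fin.val heq; simp at this; omega
    · rw [hd_not u hu, hd_not v hv] at heq
      have : c (.inl u) = c (.inl v) := by
        have := congrArg Fin.val heq; simp at this; exact Fin.ext this
      exact hc.1 _ _ ((ncorona_adj_inl_inl G₁ G₂ u v).2 huv) this
  · intro v
    obtain ⟨i, ⟨x, hx⟩, hdom⟩ := hc.2 (.inl v)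
    by_cases hbad : ∃ p : V₁ × V₂, c (.inr p) = i
    · -- the representative of i works, as a singleton class
      set j : V₁ := hbad.choose.1 with hj
      have hrep : rep i = some j := dif_pos hbad
      have hselj : Sel j := ⟨i, hrep⟩
      have hadjj : G₁.Adj v j := by
        have := hdom (.inr hbad.choose) hbad.choose_spec
        exact ((ncorona_adj_inl_inr G₁ G₂ v hbad.choose).1 this)
      refine ⟨d j, ⟨j, rfl⟩, ?_⟩
      intro u hu
      rw [hsingle j hselj u hu]
      exact hadjj
    · -- class i contains only inl vertices
      obtain ⟨u₀, hu₀⟩ : ∃ u₀ : V₁, c (.inl u₀) = i := by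
        rcases x with u₀ | p
        · exact ⟨u₀, hx⟩
        · exact absurd ⟨p, hx⟩ hbad
      by_cases hsel : Sel u₀
      · have hadj : G₁.Adj v u₀ := by
          have := hdom (.inl u₀) hu₀
          exact (ncorona_adj_inl_inl G₁ G₂ v u₀).1 this
        refine ⟨d u₀, ⟨u₀, rfl⟩, ?_⟩
        intro u hu
        rw [hsingle u₀ hsel u hu]
        exact hadj
      · refine ⟨Fin.castAdd m i, ⟨u₀, by rw [hd_not u₀ hsel, hu₀]⟩, ?_⟩
        intro u hu
        by_cases h' : Sel u
        · rw [hd_sel u h'] at hu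
          exfalso
          have := congrArg Fin.val hu; simp at this; omega
        · rw [hd_not u h'] at hu
          have : c (.inl u) = i := by
            have := congrArg Fin.val hu; simp at this; exact Fin.ext this
          exact (ncorona_adj_inl_inl G₁ G₂ v u).1 (hdom (.inl u) this)


theorem tdChromatic_ncorona_le_td_add_card {V₁ V₂ : Type*} [Fintype V₂]
    (G₁ : SimpleGraph V₁) (G₂ : SimpleGraph V₂)
    (h₁ : G₁.Connected) (h₂ : G₂.Connected) :
    tdChromatic (ncorona G₁ G₂) ≤ tdChromatic G₁ + Fintype.card V₂ := by
  classical
  by_cases h : {k | ∃ c : V₁ → Fin k, IsTDColoring G₁ c}.Nonempty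
  · have hmem : tdChromatic G₁ ∈ {k | ∃ c : V₁ → Fin k, IsTDColoring G₁ c} :=
      Nat.sInf_mem h
    obtain ⟨c, hc⟩ := hmem
    obtain ⟨c', hc'⟩ := exists_tdc_ncorona G₁ G₂ c hc
    exact Nat.sInf_le ⟨c', hc'⟩
  · have hempty : {k | ∃ c' : (V₁ ⊕ V₁ × V₂) → Fin k,
        IsTDColoring (ncorona G₁ G₂) c'} = ∅ := by
      rw [Set.eq_empty_iff_forall_notMem]
      rintro m ⟨c', hc'⟩
      obtain ⟨d, hd⟩ := exists_tdc_base G₁ G₂ c' hc'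
      exact h ⟨m + m, d, hd⟩
    rw [tdChromatic, hempty, Nat.sInf_empty]
    exact Nat.zero_le _
end

section
/- For every natural number n ≥ 2, χ_d^t(F_n ⋆ K_n) = n + 3, where F_n is the friendship graph. -/
open SimpleGraph

lemma friend_adj {n : ℕ} (u v : Option (Fin n × Fin 2)) :
    (friendshipGraph n).Adj u v ↔
      u ≠ v ∧ (u = none ∨ v = none ∨ u.map Prod.fst = v.map Prod.fst) := by
  simp only [friendshipGraph, SimpleGraph.fromRel_adj]
  constructor
  · rintro ⟨h, (h2 | h2) | (h2 | h2)⟩ <;> tauto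
  · rintro ⟨h, h2 | h2 | h2⟩ <;> tauto

lemma ncorona_adj_ll {V₁ V₂ : Type*} (G₁ : SimpleGraph V₁) (G₂ : SimpleGraph V₂)
    (u v : V₁) : (ncorona G₁ G₂).Adj (Sum.inl u) (Sum.inl v) ↔ G₁.Adj u v := by
  simp only [ncorona, SimpleGraph.fromRel_adj]
  constructor
  · rintro ⟨h, h2 | h2⟩
    · exact h2
    · exact h2.symm
  · exact fun h => ⟨by simpa using h.ne, Or.inl h⟩

lemma ncorona_adj_lr {V₁ V₂ : Type*} (G₁ : SimpleGraph V₁) (G₂ : SimpleGraph V₂)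
    (u i : V₁) (w : V₂) :
    (ncorona G₁ G₂).Adj (Sum.inl u) (Sum.inr (i, w)) ↔ G₁.Adj u i := by
  simp only [ncorona, SimpleGraph.fromRel_adj]
  constructor
  · rintro ⟨h, h2 | h2⟩
    · exact h2
    · exact h2.elim
  · exact fun h => ⟨by simp, Or.inl h⟩

lemma ncorona_adj_rl {V₁ V₂ : Type*} (G₁ : SimpleGraph V₁) (G₂ : SimpleGraph V₂)
    (u i : V₁) (w : V₂) :
    (ncorona G₁ G₂).Adj (Sum.inr (i, w)) (Sum.inl u) ↔ G₁.Adj u i := by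
  rw [SimpleGraph.adj_comm]; exact ncorona_adj_lr G₁ G₂ u i w

lemma ncorona_adj_rr {V₁ V₂ : Type*} (G₁ : SimpleGraph V₁) (G₂ : SimpleGraph V₂)
    (i j : V₁) (w x : V₂) :
    (ncorona G₁ G₂).Adj (Sum.inr (i, w)) (Sum.inr (j, x)) ↔ i = j ∧ G₂.Adj w x := by
  simp only [ncorona, SimpleGraph.fromRel_adj]
  constructor
  · rintro ⟨h, ⟨rfl, h2⟩ | ⟨rfl, h2⟩⟩
    · exact ⟨rfl, h2⟩
    · exact ⟨rfl, h2.symm⟩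
  · rintro ⟨rfl, h⟩
    exact ⟨by simp [h.ne], Or.inl ⟨rfl, h⟩⟩

def ubColor (n : ℕ) : (Option (Fin n × Fin 2) ⊕ Option (Fin n × Fin 2) × Fin n) → Fin (n + 3)
  | .inl none => ⟨n + 2, by omega⟩
  | .inl (some (_, j)) => if j = 0 then ⟨n, by omega⟩ else ⟨n + 1, by omega⟩
  | .inr (_, w) => ⟨w.1, by omega⟩

lemma ubColor_none (n : ℕ) : ubColor n (Sum.inl none) = ⟨n + 2, by omega⟩ := rfl
lemma ubColor_some (n : ℕ) (i : Fin n) (j : Fin 2) :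
    ubColor n (Sum.inl (some (i, j))) =
      if j = 0 then ⟨n, by omega⟩ else ⟨n + 1, by omega⟩ := rfl
lemma ubColor_inr (n : ℕ) (u : Option (Fin n × Fin 2)) (w : Fin n) :
    ubColor n (Sum.inr (u, w)) = ⟨w.1, by omega⟩ := rfl

lemma ub_td (n : ℕ) (hn : 2 ≤ n) :
    IsTDColoring (ncorona (friendshipGraph n) (⊤ : SimpleGraph (Fin n))) (ubColor n) := by
  constructor
  · rintro (u | ⟨u, w⟩) (v | ⟨v, x⟩) h
    · rw [ncorona_adj_ll, friend_adj] at h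
      rcases u with _ | ⟨i, j⟩ <;> rcases v with _ | ⟨i', j'⟩
      · exact absurd rfl h.1
      · simp only [ubColor_none, ubColor_some, ubColor_inr]
        split_ifs <;> (intro heq; rw [Fin.ext_iff] at heq; simp at heq; try omega)
      · simp only [ubColor_none, ubColor_some, ubColor_inr]
        split_ifs <;> (intro heq; rw [Fin.ext_iff] at heq; simp at heq; try omega)
      · have hij : i = i' ∧ j ≠ j' := by
          obtain ⟨hne, h2 | h2 | h2⟩ := h
          · exact absurd h2 (by simp)
          · exact absurd h2 (by simp)
          · simp only [Option.map_some] at h2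
            have : i = i' := by injection h2
            subst this
            exact ⟨rfl, fun hj => hne (by rw [hj])⟩
        obtain ⟨rfl, hj⟩ := hij
        simp only [ubColor_none, ubColor_some, ubColor_inr]
        have : j = 0 ∧ j' ≠ 0 ∨ j ≠ 0 ∧ j' = 0 := by omega
        split_ifs <;> (intro heq; rw [Fin.ext_iff] at heq; simp at heq <;> try omega) <;> tauto
    · have hx := x.2
      rcases u with _ | ⟨i, j⟩
      · simp only [ubColor_none, ubColor_inr]
        intro heq; rw [Fin.ext_iff] at heq; simp at heq; omega
      · simp only [ubColor_some, ubColor_inr]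
        split_ifs <;> (intro heq; rw [Fin.ext_iff] at heq; simp at heq; omega)
    · have hw := w.2
      rcases v with _ | ⟨i, j⟩
      · simp only [ubColor_none, ubColor_inr]
        intro heq; rw [Fin.ext_iff] at heq; simp at heq; omega
      · simp only [ubColor_some, ubColor_inr]
        split_ifs <;> (intro heq; rw [Fin.ext_iff] at heq; simp at heq; omega)
    · rw [ncorona_adj_rr] at h
      obtain ⟨rfl, h2⟩ := h
      simp only [ubColor_none, ubColor_some, ubColor_inr]
      intro heq; rw [Fin.ext_iff] at heq; simp at heq
      exact (SimpleGraph.top_adj _ _).1 h2 (Fin.ext heq)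
  · have h0n : (0 : ℕ) < n := by omega
    rintro (v | ⟨v, w⟩)
    · rcases v with _ | ⟨i, j⟩
      · -- hub: dominated by color class n (the inl (some (_,0)) vertices)
        refine ⟨⟨n, by omega⟩, ⟨Sum.inl (some (⟨0, h0n⟩, 0)), by simp [ubColor_none, ubColor_some, ubColor_inr]⟩, ?_⟩
        rintro (u | ⟨u, x⟩) hu
        · rcases u with _ | ⟨i', j'⟩
          · exfalso; rw [Fin.ext_iff] at hu; simp [ubColor_none, ubColor_some, ubColor_inr] at hu; try omega
          · rw [ncorona_adj_ll, friend_adj]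
            exact ⟨by simp, Or.inl rfl⟩
        · exfalso; rw [Fin.ext_iff] at hu; simp [ubColor_none, ubColor_some, ubColor_inr] at hu; try omega
      · -- other hub-adjacent vertices: dominated by class n+2 = {inl none}
        refine ⟨⟨n + 2, by omega⟩, ⟨Sum.inl none, by simp [ubColor_none, ubColor_some, ubColor_inr]⟩, ?_⟩
        rintro (u | ⟨u, x⟩) hu
        · rcases u with _ | ⟨i', j'⟩
          · rw [ncorona_adj_ll, friend_adj]
            exact ⟨by simp, Or.inr (Or.inl rfl)⟩
          · exfalso; rw [Fin.ext_iff] at hu; simp only [ubColor_none, ubColor_some, ubColor_inr] at hu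
            split_ifs at hu <;> simp at hu <;> omega
        · exfalso; rw [Fin.ext_iff] at hu; simp [ubColor_none, ubColor_some, ubColor_inr] at hu; try omega
    · rcases v with _ | ⟨i, j⟩
      · -- copies of the hub: dominated by class n
        refine ⟨⟨n, by omega⟩, ⟨Sum.inl (some (⟨0, h0n⟩, 0)), by simp [ubColor_none, ubColor_some, ubColor_inr]⟩, ?_⟩
        rintro (u | ⟨u, x⟩) hu
        · rcases u with _ | ⟨i', j'⟩
          · exfalso; rw [Fin.ext_iff] at hu; simp [ubColor_none, ubColor_some, ubColor_inr] at hu; try omega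
          · have hj' : j' = 0 := by
              by_contra hne
              rw [Fin.ext_iff] at hu; simp only [ubColor_none, ubColor_some, ubColor_inr] at hu
              rw [if_neg hne] at hu; simp at hu
            rw [ncorona_adj_rl, friend_adj]
            exact ⟨by simp, Or.inr (Or.inl rfl)⟩
        · exfalso; rw [Fin.ext_iff] at hu; simp [ubColor_none, ubColor_some, ubColor_inr] at hu; try omega
      · -- copies of non-hub vertices: dominated by class n+2 = {inl none}
        refine ⟨⟨n + 2, by omega⟩, ⟨Sum.inl none, by simp [ubColor_none, ubColor_some, ubColor_inr]⟩, ?_⟩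
        rintro (u | ⟨u, x⟩) hu
        · rcases u with _ | ⟨i', j'⟩
          · rw [ncorona_adj_rl, friend_adj]
            exact ⟨by simp, Or.inl rfl⟩
          · exfalso; rw [Fin.ext_iff] at hu; simp only [ubColor_none, ubColor_some, ubColor_inr] at hu
            split_ifs at hu <;> simp at hu <;> omega
        · exfalso; rw [Fin.ext_iff] at hu; simp [ubColor_none, ubColor_some, ubColor_inr] at hu; try omega

lemma lb_td (n : ℕ) (hn : 2 ≤ n) (k : ℕ)
    (c : (Option (Fin n × Fin 2) ⊕ Option (Fin n × Fin 2) × Fin n) → Fin k)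
    (hc : IsTDColoring (ncorona (friendshipGraph n) (⊤ : SimpleGraph (Fin n))) c) :
    n + 3 ≤ k := by
  by_contra hk
  push_neg at hk
  have hk' : k ≤ n + 2 := by omega
  obtain ⟨hp, hd⟩ := hc
  have h0n : (0 : ℕ) < n := by omega
  set i₀ : Fin n := ⟨0, h0n⟩ with hi₀
  -- key: with at most n+2 colors, every color appears on the clique
  -- {inl none, inl (some (i₀, b))} ∪ copy (i₀, a)
  have key : ∀ a b : Fin 2, a ≠ b → ∀ X : Fin k,
      X = c (Sum.inl none) ∨ X = c (Sum.inl (some (i₀, b))) ∨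
        ∃ w, c (Sum.inr (some (i₀, a), w)) = X := by
    intro a b hab X
    have hinj : Function.Injective (fun w : Fin n => c (Sum.inr (some (i₀, a), w))) := by
      intro w x hwx
      by_contra hne
      exact hp _ _ ((ncorona_adj_rr _ _ _ _ _ _).2 ⟨rfl, by simpa using hne⟩) hwx
    set S : Finset (Fin k) :=
      insert (c (Sum.inl none)) (insert (c (Sum.inl (some (i₀, b))))
        (Finset.image (fun w : Fin n => c (Sum.inr (some (i₀, a), w))) Finset.univ)) with hS
    have hadj_nb : (ncorona (friendshipGraph n) (⊤ : SimpleGraph (Fin n))).Adj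
        (Sum.inl none) (Sum.inl (some (i₀, b))) := by
      rw [ncorona_adj_ll, friend_adj]; exact ⟨by simp, Or.inl rfl⟩
    have hadj_na : ∀ w, (ncorona (friendshipGraph n) (⊤ : SimpleGraph (Fin n))).Adj
        (Sum.inl none) (Sum.inr (some (i₀, a), w)) := by
      intro w; rw [ncorona_adj_lr, friend_adj]; exact ⟨by simp, Or.inl rfl⟩
    have hadj_ba : ∀ w, (ncorona (friendshipGraph n) (⊤ : SimpleGraph (Fin n))).Adj
        (Sum.inl (some (i₀, b))) (Sum.inr (some (i₀, a), w)) := by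
      intro w; rw [ncorona_adj_lr, friend_adj]
      refine ⟨by simpa using hab.symm, ?_⟩
      exact Or.inr (Or.inr (by simp))
    have hcard : S.card = n + 2 := by
      rw [hS]
      rw [Finset.card_insert_of_notMem, Finset.card_insert_of_notMem,
        Finset.card_image_of_injective _ hinj, Finset.card_univ, Fintype.card_fin]
      · simp only [Finset.mem_image, Finset.mem_univ, true_and, not_exists]
        exact fun w => fun h => hp _ _ (hadj_ba w) h.symm
      · simp only [Finset.mem_insert, Finset.mem_image, Finset.mem_univ, true_and, not_or,
          not_exists]
        exact ⟨hp _ _ hadj_nb, fun w h => hp _ _ (hadj_na w) h.symm⟩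
    have hSuniv : S = Finset.univ := by
      apply Finset.eq_univ_of_card
      have : S.card ≤ Fintype.card (Fin k) := Finset.card_le_univ S
      rw [Fintype.card_fin] at *
      omega
    have hXS : X ∈ S := hSuniv ▸ Finset.mem_univ X
    rw [hS] at hXS
    simp only [Finset.mem_insert, Finset.mem_image, Finset.mem_univ, true_and] at hXS
    tauto
  -- total domination at a copy of the hub yields a contradiction
  obtain ⟨X, -, hX⟩ := hd (Sum.inr (none, i₀))
  have hnone : X ≠ c (Sum.inl none) := by
    intro h
    have := hX (Sum.inl none) h.symm
    rw [ncorona_adj_rl, friend_adj] at this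
    exact this.1 rfl
  have hcopy : ∀ (a : Fin 2) w, c (Sum.inr (some (i₀, a), w)) ≠ X := by
    intro a w h
    have := hX _ h
    rw [ncorona_adj_rr] at this
    exact (Option.some_ne_none _ this.1.symm)
  have h1 : X = c (Sum.inl (some (i₀, 1))) := by
    rcases key 0 1 (by decide) X with h | h | ⟨w, hw⟩
    · exact absurd h hnone
    · exact h
    · exact absurd hw (hcopy 0 w)
  have h2 : X = c (Sum.inl (some (i₀, 0))) := by
    rcases key 1 0 (by decide) X with h | h | ⟨w, hw⟩
    · exact absurd h hnone
    · exact h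
    · exact absurd hw (hcopy 1 w)
  have hadj : (ncorona (friendshipGraph n) (⊤ : SimpleGraph (Fin n))).Adj
      (Sum.inl (some (i₀, 0))) (Sum.inl (some (i₀, 1))) := by
    rw [ncorona_adj_ll, friend_adj]
    exact ⟨by simp, Or.inr (Or.inr (by simp))⟩
  exact hp _ _ hadj (h2 ▸ h1 ▸ rfl)

theorem tdChromatic_friendship_ncorona_complete (n : ℕ) (hn : 2 ≤ n) :
    tdChromatic (ncorona (friendshipGraph n) (⊤ : SimpleGraph (Fin n))) = n + 3 := by
  refine le_antisymm (Nat.sInf_le ⟨ubColor n, ub_td n hn⟩)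
    (le_csInf ⟨n + 3, ubColor n, ub_td n hn⟩ ?_)
  rintro k ⟨c, hc⟩
  exact lb_td n hn k c hc
end

section
/- For every natural number n ≥ 2, χ_d^t(F_n ⋆ C_{2n}) = 5 when 2n ≥ 3 and 2n is even (so χ(C_{2n}) = 2), where F_n is the friendship graph. -/
open SimpleGraph

section Helpers

lemma cyc_sub_val {m : ℕ} (u v : Fin m) (h : (u - v).val = 1) :
    (u.val = v.val + 1) ∨ (u.val = 0 ∧ v.val + 1 = m) := by
  have hm := u.pos
  rw [Fin.sub_def] at h
  simp only at h
  have hu := u.isLt; have hv := v.isLt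
  rcases Nat.lt_or_ge (m - v.val + u.val) m with hlt | hge
  · rw [Nat.mod_eq_of_lt hlt] at h; omega
  · have h2 : m - v.val + u.val - m < m := by omega
    rw [Nat.mod_eq_sub_mod hge, Nat.mod_eq_of_lt h2] at h
    omega

lemma cyc_parity {n : ℕ} (hn : 1 ≤ n) {u v : Fin (2 * n)}
    (h : (cycleGraph (2 * n)).Adj u v) : u.val % 2 ≠ v.val % 2 := by
  rw [cycleGraph_adj'] at h
  rcases h with h | h <;> rcases cyc_sub_val _ _ h with h' | h' <;> omega

lemma cyc_adj01 {n : ℕ} (hn : 2 ≤ n) :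
    (cycleGraph (2 * n)).Adj ⟨0, by omega⟩ ⟨1, by omega⟩ := by
  rw [cycleGraph_adj']
  right
  rw [Fin.sub_def]
  simp only
  have : 2 * n - 0 + 1 = 2 * n + 1 := by omega
  rw [this, Nat.add_mod_left, Nat.mod_eq_of_lt (by omega)]

lemma fAdj_iff {n : ℕ} {u v : Option (Fin n × Fin 2)} :
    (friendshipGraph n).Adj u v ↔ u ≠ v ∧ (u = none ∨ v = none ∨ u.map Prod.fst = v.map Prod.fst) := by
  unfold friendshipGraph
  rw [SimpleGraph.fromRel_adj]
  constructor
  · rintro ⟨h1, h2 | h2⟩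
    · exact ⟨h1, by tauto⟩
    · rcases h2 with h2 | h2
      · exact ⟨h1, Or.inr (Or.inl h2)⟩
      · exact ⟨h1, Or.inr (Or.inr h2.symm)⟩
  · rintro ⟨h1, h2 | h2 | h2⟩
    · exact ⟨h1, Or.inl (Or.inl h2)⟩
    · exact ⟨h1, Or.inr (Or.inl h2)⟩
    · exact ⟨h1, Or.inl (Or.inr h2)⟩

lemma fAdj_none_some {n : ℕ} (p : Fin n × Fin 2) :
    (friendshipGraph n).Adj none (some p) := by
  rw [fAdj_iff]; exact ⟨by simp, Or.inl rfl⟩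

lemma fAdj_some_some {n : ℕ} (i : Fin n) {a b : Fin 2} (hab : a ≠ b) :
    (friendshipGraph n).Adj (some (i, a)) (some (i, b)) := by
  rw [fAdj_iff]
  refine ⟨by simp [hab], Or.inr (Or.inr rfl)⟩

lemma fAdj_to_some {n : ℕ} {u : Option (Fin n × Fin 2)} {i : Fin n} {a : Fin 2}
    (h : (friendshipGraph n).Adj u (some (i, a))) :
    u = none ∨ ∃ b, b ≠ a ∧ u = some (i, b) := by
  rw [fAdj_iff] at h
  obtain ⟨hne, h | h | h⟩ := h
  · exact Or.inl h
  · exact absurd h (by simp)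
  · rcases u with _ | ⟨j, b⟩
    · exact Or.inl rfl
    · simp only [Option.map_some, Option.some.injEq] at h
      right
      refine ⟨b, ?_, by rw [h]⟩
      rintro rfl
      exact hne (by rw [h])

variable {V₁ V₂ : Type*} {G₁ : SimpleGraph V₁} {G₂ : SimpleGraph V₂}

lemma nc_inl_inl {u v : V₁} :
    (ncorona G₁ G₂).Adj (.inl u) (.inl v) ↔ G₁.Adj u v := by
  unfold ncorona
  rw [SimpleGraph.fromRel_adj]
  constructor
  · rintro ⟨h1, h2 | h2⟩
    · exact h2
    · exact h2.symm
  · intro h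
    exact ⟨by simp [h.ne], Or.inl h⟩

lemma nc_inl_inr {u v : V₁} {w : V₂} :
    (ncorona G₁ G₂).Adj (.inl u) (.inr (v, w)) ↔ G₁.Adj u v := by
  unfold ncorona
  rw [SimpleGraph.fromRel_adj]
  constructor
  · rintro ⟨h1, h2 | h2⟩
    · exact h2
    · exact h2.elim
  · intro h
    exact ⟨by simp, Or.inl h⟩

lemma nc_inr_inl {u v : V₁} {w : V₂} :
    (ncorona G₁ G₂).Adj (.inr (v, w)) (.inl u) ↔ G₁.Adj u v :=
  ⟨fun h => nc_inl_inr.mp h.symm, fun h => (nc_inl_inr.mpr h).symm⟩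

lemma nc_inr_inr {v v' : V₁} {w w' : V₂} :
    (ncorona G₁ G₂).Adj (.inr (v, w)) (.inr (v', w')) ↔ v = v' ∧ G₂.Adj w w' := by
  unfold ncorona
  rw [SimpleGraph.fromRel_adj]
  constructor
  · rintro ⟨h1, ⟨h2, h3⟩ | ⟨h2, h3⟩⟩
    · exact ⟨h2, h3⟩
    · exact ⟨h2.symm, h3.symm⟩
  · rintro ⟨rfl, h⟩
    exact ⟨by simp [h.ne], Or.inl ⟨rfl, h⟩⟩

end Helpers

section Main

def tdcol (n : ℕ) : (Option (Fin n × Fin 2)) ⊕ (Option (Fin n × Fin 2)) × Fin (2 * n) → Fin 5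
  | .inl none => 0
  | .inl (some (_, a)) => if a = 0 then 1 else 2
  | .inr (_, w) => if w.val % 2 = 0 then 3 else 4

lemma tdcol_eq_zero {n : ℕ} (w) (hw : tdcol n w = 0) : w = .inl none := by
  rcases w with (_ | ⟨i, a⟩) | ⟨v, t⟩
  · rfl
  · simp only [tdcol] at hw; split_ifs at hw <;> exact absurd hw (by decide)
  · simp only [tdcol] at hw; split_ifs at hw <;> exact absurd hw (by decide)

lemma tdcol_eq_one {n : ℕ} (w) (hw : tdcol n w = 1) : ∃ i, w = .inl (some (i, 0)) := by
  rcases w with (_ | ⟨i, a⟩) | ⟨v, t⟩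
  · simp only [tdcol] at hw; exact absurd hw (by decide)
  · simp only [tdcol] at hw
    split_ifs at hw with h
    · exact ⟨i, by rw [h]⟩
    · exact absurd hw (by decide)
  · simp only [tdcol] at hw; split_ifs at hw <;> exact absurd hw (by decide)

lemma tdcol_isTD {n : ℕ} (hn : 2 ≤ n) :
    IsTDColoring (ncorona (friendshipGraph n) (SimpleGraph.cycleGraph (2 * n))) (tdcol n) := by
  constructor
  · intro u v h
    rcases u with (_ | ⟨i, a⟩) | ⟨v1, w1⟩ <;> rcases v with (_ | ⟨j, b⟩) | ⟨v2, w2⟩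
    · exact absurd rfl (nc_inl_inl.mp h).ne
    · simp only [tdcol]; split_ifs <;> decide
    · simp only [tdcol]; split_ifs <;> decide
    · simp only [tdcol]; split_ifs <;> decide
    · have h' := nc_inl_inl.mp h
      rcases fAdj_to_some h' with h'' | ⟨b', hb', h''⟩
      · exact absurd h'' (by simp)
      · simp only [Option.some.injEq, Prod.mk.injEq] at h''
        obtain ⟨rfl, rfl⟩ := h''
        simp only [tdcol]
        fin_cases a <;> fin_cases b <;> simp_all <;> decide
    · simp only [tdcol]; split_ifs <;> decide
    · simp only [tdcol]; split_ifs <;> decide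
    · simp only [tdcol]; split_ifs <;> decide
    · obtain ⟨rfl, hc⟩ := nc_inr_inr.mp h
      have hparity := cyc_parity (by omega) hc
      have h1 := Nat.mod_two_eq_zero_or_one w1.val
      have h2 := Nat.mod_two_eq_zero_or_one w2.val
      simp only [tdcol]
      rcases h1 with h1 | h1 <;> rcases h2 with h2 | h2 <;>
        simp [h1, h2] at hparity ⊢ <;> decide
  · intro v
    rcases v with (_ | p) | ⟨(_ | p), w⟩
    · refine ⟨1, ⟨.inl (some (⟨0, by omega⟩, 0)), by simp [tdcol]⟩, ?_⟩
      intro w hw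
      obtain ⟨i, rfl⟩ := tdcol_eq_one w hw
      exact nc_inl_inl.mpr (fAdj_none_some _)
    · refine ⟨0, ⟨.inl none, rfl⟩, ?_⟩
      intro w hw
      rw [tdcol_eq_zero w hw]
      exact nc_inl_inl.mpr (fAdj_none_some p).symm
    · refine ⟨1, ⟨.inl (some (⟨0, by omega⟩, 0)), by simp [tdcol]⟩, ?_⟩
      intro w' hw'
      obtain ⟨i, rfl⟩ := tdcol_eq_one w' hw'
      exact nc_inr_inl.mpr (fAdj_none_some _).symm
    · refine ⟨0, ⟨.inl none, rfl⟩, ?_⟩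
      intro w' hw'
      rw [tdcol_eq_zero w' hw']
      exact nc_inr_inl.mpr (fAdj_none_some p)

lemma five_le {k : ℕ} (a b c d e : Fin k) (h1 : a ≠ b) (h2 : a ≠ c) (h3 : a ≠ d) (h4 : a ≠ e)
    (h5 : b ≠ c) (h6 : b ≠ d) (h7 : b ≠ e) (h8 : c ≠ d) (h9 : c ≠ e) (h10 : d ≠ e) : 5 ≤ k := by
  have hcard : ({a, b, c, d, e} : Finset (Fin k)).card = 5 := by
    rw [Finset.card_insert_of_notMem (by simp [h1, h2, h3, h4]),
        Finset.card_insert_of_notMem (by simp [h5, h6, h7]),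
        Finset.card_insert_of_notMem (by simp [h8, h9]),
        Finset.card_insert_of_notMem (by simp [h10]),
        Finset.card_singleton]
  calc 5 = ({a, b, c, d, e} : Finset (Fin k)).card := hcard.symm
    _ ≤ Finset.univ.card := Finset.card_le_univ _
    _ = k := by simp

lemma tdcol_lower {n : ℕ} (hn : 2 ≤ n) {k : ℕ}
    (c : (Option (Fin n × Fin 2)) ⊕ (Option (Fin n × Fin 2)) × Fin (2 * n) → Fin k)
    (hc : IsTDColoring (ncorona (friendshipGraph n) (SimpleGraph.cycleGraph (2 * n))) c) :
    5 ≤ k := by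
  obtain ⟨hp, hd⟩ := hc
  set i0 : Fin n := ⟨0, by omega⟩ with hi0
  set i1 : Fin n := ⟨1, by omega⟩ with hi1
  set z0 : Fin (2 * n) := ⟨0, by omega⟩ with hz0
  set z1 : Fin (2 * n) := ⟨1, by omega⟩ with hz1
  by_cases hP : ∀ w, c w = c (Sum.inl none) → w = Sum.inl none
  · refine five_le (c (Sum.inl none)) (c (.inl (some (i0, 0)))) (c (.inl (some (i0, 1))))
      (c (.inr (none, z0))) (c (.inr (none, z1)))
      (hp _ _ (nc_inl_inl.mpr (fAdj_none_some _)))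
      (hp _ _ (nc_inl_inl.mpr (fAdj_none_some _)))
      (fun h => by simpa using hP _ h.symm)
      (fun h => by simpa using hP _ h.symm)
      (hp _ _ (nc_inl_inl.mpr (fAdj_some_some i0 (by decide))))
      (fun h => (hp _ _ (nc_inr_inl.mpr (fAdj_none_some _).symm)) h.symm)
      (fun h => (hp _ _ (nc_inr_inl.mpr (fAdj_none_some _).symm)) h.symm)
      (fun h => (hp _ _ (nc_inr_inl.mpr (fAdj_none_some _).symm)) h.symm)
      (fun h => (hp _ _ (nc_inr_inl.mpr (fAdj_none_some _).symm)) h.symm)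
      (hp _ _ (nc_inr_inr.mpr ⟨rfl, cyc_adj01 hn⟩))
  · push_neg at hP
    obtain ⟨w0, hw0c, hw0ne⟩ := hP
    have H := fun (i : Fin n) (a : Fin 2) => hd (Sum.inr (some (i, a), z0))
    choose d hdne hdadj using H
    have nbr : ∀ i a w, c w = d i a →
        w = Sum.inl none ∨ (∃ b, b ≠ a ∧ w = Sum.inl (some (i, b))) ∨
          ∃ t, w = Sum.inr (some (i, a), t) := by
      intro i a w hw
      have h := hdadj i a w hw
      rcases w with u | ⟨v, t⟩
      · rcases fAdj_to_some (nc_inr_inl.mp h) with h' | ⟨b, hb, h'⟩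
        · exact Or.inl (by rw [h'])
        · exact Or.inr (Or.inl ⟨b, hb, by rw [h']⟩)
      · obtain ⟨hv, -⟩ := nc_inr_inr.mp h
        exact Or.inr (Or.inr ⟨t, by rw [← hv]⟩)
    have hforced : ∀ i a i' a', ((i, a) : Fin n × Fin 2) ≠ (i', a') → d i a = d i' a' →
        ∀ w, c w = d i a → w = Sum.inl none := by
      intro i a i' a' hne heq w hw
      have h1 := nbr i a w hw
      have h2 := nbr i' a' w (heq ▸ hw)
      rcases h1 with h | ⟨b, hb, rfl⟩ | ⟨t, rfl⟩
      · exact h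
      · rcases h2 with h | ⟨b', hb', h'⟩ | ⟨t, h'⟩
        · exact absurd h (by simp)
        · simp only [Sum.inl.injEq, Option.some.injEq, Prod.mk.injEq] at h'
          obtain ⟨rfl, rfl⟩ := h'
          have haa : a = a' := by fin_cases b <;> fin_cases a <;> fin_cases a' <;> simp_all
          exact absurd (by rw [haa]) hne
        · exact absurd h' (by simp)
      · rcases h2 with h | ⟨b', hb', h'⟩ | ⟨t', h'⟩
        · exact absurd h (by simp)
        · exact absurd h' (by simp)
        · simp only [Sum.inr.injEq, Prod.mk.injEq, Option.some.injEq] at h'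
          obtain ⟨⟨rfl, rfl⟩, -⟩ := h'
          exact absurd rfl hne
    have ddist : ∀ i a i' a', ((i, a) : Fin n × Fin 2) ≠ (i', a') → d i a ≠ d i' a' := by
      intro i a i' a' hne heq
      obtain ⟨w, hw⟩ := hdne i a
      have hwn := hforced i a i' a' hne heq w hw
      have hA : c (Sum.inl none) = d i a := hwn ▸ hw
      have : c w0 = d i a := hw0c.trans hA
      exact hw0ne (hforced i a i' a' hne heq w0 this)
    have dE : ∀ i a, d i a ≠ c (Sum.inr (none, z0)) := by
      intro i a h
      rcases nbr i a _ h.symm with h' | ⟨b, hb, h'⟩ | ⟨t, h'⟩ <;> simp at h'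
    have hii : i0 ≠ i1 := by
      rw [hi0, hi1]
      intro h
      injection h with h
      omega
    refine five_le (d i0 0) (d i0 1) (d i1 0) (d i1 1) (c (Sum.inr (none, z0)))
      (ddist _ _ _ _ (by simp)) (ddist _ _ _ _ (by simp [hii]))
      (ddist _ _ _ _ (by simp [hii])) (dE _ _)
      (ddist _ _ _ _ (by simp [hii])) (ddist _ _ _ _ (by simp [hii])) (dE _ _)
      (ddist _ _ _ _ (by simp)) (dE _ _) (dE _ _)

end Main

theorem tdChromatic_friendship_ncorona_cycle (n : ℕ) (hn : 2 ≤ n) :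
    tdChromatic (ncorona (friendshipGraph n) (SimpleGraph.cycleGraph (2 * n))) = 5 := by
  have hmem : 5 ∈ {k | ∃ c : _ → Fin k,
      IsTDColoring (ncorona (friendshipGraph n) (SimpleGraph.cycleGraph (2 * n))) c} :=
    ⟨tdcol n, tdcol_isTD hn⟩
  refine le_antisymm (Nat.sInf_le hmem) (le_csInf ⟨5, hmem⟩ ?_)
  rintro k ⟨c, hc⟩
  exact tdcol_lower hn c hc
end

section
/- For every n ≥ 2, the TDC-stability of the friendship graph F_n equals 1. -/
open SimpleGraph

/-!
`F_n` contains a triangle, so `χ_d^t(F_n) ≥ 3`, and coloring the centre `0` and the two outer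
vertices of every triangle `1` and `2` attains this bound. Deleting the centre leaves the perfect
matching `n K₂`, where the only class that can dominate a vertex is the singleton of its partner;
so all `2n` vertices get distinct colors and `χ_d^t(n K₂) = 2n ≠ 3`. Since the stability only
counts nonempty deletion sets, deleting the centre alone is optimal.
-/

section TotalDominatorColoring

variable {V : Type*} {G : SimpleGraph V}

theorem tdChromatic_eq_of_exists_of_forall_le {m : ℕ}
    (hex : ∃ c : V → Fin m, IsTDColoring G c)
    (hle : ∀ k (c : V → Fin k), IsTDColoring G c → m ≤ k) : tdChromatic G = m :=
  IsLeast.csInf_eq ⟨hex, fun k ⟨c, hc⟩ => hle k c hc⟩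

theorem IsTDColoring.card_le_of_isClique {k : ℕ} {c : V → Fin k} (hc : IsTDColoring G c)
    {s : Finset V} (hs : G.IsClique s) : s.card ≤ k := by
  simpa using hs.card_le_of_coloring (Coloring.mk c (hc.1 _ _))

theorem tdChromatic_eq_card_of_existsUnique_adj [Finite V] (h : ∀ v, ∃! w, G.Adj v w) :
    tdChromatic G = Nat.card V := by
  set e := Finite.equivFin V
  apply tdChromatic_eq_of_exists_of_forall_le
  · refine ⟨e, fun u v huv => e.injective.ne huv.ne, fun v => ?_⟩
    obtain ⟨w, hvw, -⟩ := h v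
    exact ⟨e w, ⟨w, rfl⟩, fun x hx => e.injective hx ▸ hvw⟩
  · intro k c hc
    choose dom hdom_nonempty hdom_adj using hc.2
    have hdom_inj : Function.Injective dom := by
      intro v v' hvv'
      obtain ⟨w, hw⟩ := hdom_nonempty v
      exact (h w).unique (hdom_adj v w hw).symm (hdom_adj v' w (hw.trans hvv')).symm
    simpa using Nat.card_le_card_of_injective dom hdom_inj

theorem tdStability_eq_one_of_tdChromatic_induce_ne [Fintype V] (v : V)
    (h : tdChromatic (G.induce {w | w ∉ ({v} : Finset V)}) ≠ tdChromatic G) :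
    tdStability G = 1 := by
  have hmem : 1 ∈ {k | ∃ S : Finset V, S.card = k ∧ 0 < k ∧
      tdChromatic (G.induce {v | v ∉ S}) ≠ tdChromatic G} :=
    ⟨{v}, Finset.card_singleton v, one_pos, h⟩
  exact le_antisymm (Nat.sInf_le hmem) (le_csInf ⟨1, hmem⟩ fun _ ⟨_, _, hk, _⟩ => hk)

end TotalDominatorColoring

theorem Nat.card_setOf_notMem_singleton {V : Type*} [Finite V] (v : V) :
    Nat.card {w | w ∉ ({v} : Finset V)} = Nat.card V - 1 := by
  rw [Nat.card_coe_set_eq]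
  simpa [Set.compl_def] using Set.ncard_compl {v}

namespace FriendshipGraph

variable {n : ℕ}

@[simp]
theorem adj_none_some (p : Fin n × Fin 2) : (friendshipGraph n).Adj none (some p) := by
  simp [friendshipGraph]

@[simp]
theorem adj_some_none (p : Fin n × Fin 2) : (friendshipGraph n).Adj (some p) none :=
  (adj_none_some p).symm

@[simp]
theorem adj_some_some {p q : Fin n × Fin 2} :
    (friendshipGraph n).Adj (some p) (some q) ↔ p.1 = q.1 ∧ p.2 ≠ q.2 := by
  simp only [friendshipGraph, fromRel_adj, ne_eq, Option.some.injEq, Prod.ext_iff, not_and,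
    eq_comm, reduceCtorEq, Option.map_some, false_or, or_self]
  tauto

def tdColoring : Option (Fin n × Fin 2) → Fin 3
  | none => 0
  | some p => p.2.succ

theorem isTDColoring_tdColoring (hn : 0 < n) :
    IsTDColoring (friendshipGraph n) tdColoring := by
  refine ⟨?_, ?_⟩
  · rintro (_ | p) (_ | q) hadj
    · exact absurd rfl hadj.ne
    all_goals simp_all [tdColoring, (Fin.succ_ne_zero _).symm]
  · rintro (_ | p)
    · refine ⟨1, ⟨some (⟨0, hn⟩, 0), rfl⟩, ?_⟩
      rintro (_ | q) hq <;> simp_all [tdColoring]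
    · refine ⟨0, ⟨none, rfl⟩, ?_⟩
      rintro (_ | q) hq <;> simp_all [tdColoring]

theorem tdChromatic_eq_three (hn : 0 < n) : tdChromatic (friendshipGraph n) = 3 := by
  apply tdChromatic_eq_of_exists_of_forall_le ⟨_, isTDColoring_tdColoring hn⟩
  intro k c hc
  let i : Fin n := ⟨0, hn⟩
  have htriangle : (friendshipGraph n).IsClique
      ({none, some (i, 0), some (i, 1)} : Finset (Option (Fin n × Fin 2))) := by
    simp [isClique_insert]
  simpa using hc.card_le_of_isClique htriangle

theorem existsUnique_adj_induce_notMem_none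
    (v : {w | w ∉ ({none} : Finset (Option (Fin n × Fin 2)))}) :
    ∃! w, ((friendshipGraph n).induce {w | w ∉ ({none} : Finset _)}).Adj v w := by
  rcases v with ⟨_ | ⟨i, j⟩, hv⟩
  · simp at hv
  refine ⟨⟨some (i, j.rev), by simp⟩, ?_, ?_⟩
  · fin_cases j <;> simp
  · rintro ⟨_ | ⟨i', j'⟩, hw⟩ hadj
    · simp at hw
    obtain ⟨rfl, hjj'⟩ : i = i' ∧ j ≠ j' := by simpa using hadj
    fin_cases j <;> fin_cases j' <;> simp_all

end FriendshipGraph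

theorem tdStability_friendshipGraph (n : ℕ) (hn : 2 ≤ n) :
    tdStability (friendshipGraph n) = 1 := by
  apply tdStability_eq_one_of_tdChromatic_induce_ne none
  rw [tdChromatic_eq_card_of_existsUnique_adj FriendshipGraph.existsUnique_adj_induce_notMem_none,
    Nat.card_setOf_notMem_singleton, Nat.card_eq_fintype_card, Fintype.card_option,
    FriendshipGraph.tdChromatic_eq_three (by omega)]
  simp only [Fintype.card_prod, Fintype.card_fin, Nat.add_sub_cancel]
  omega
end

section
/- For every n ≥ 3, the TDC-stability of the book graph B_n = K_{1,n} □ P₂ equals 1. -/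
/-!
Colouring each vertex of `K_{1,n} □ P₂` by its side of the star and its level is a total
dominator colouring, so `χ_d^t(B_n) ≤ 4`. Delete the upper hub. Each upper leaf is then pendant
at the lower leaf of its page, so the `n` lower leaves are singleton colour classes, and the lower
hub needs a colour of its own. If every upper leaf had the lower hub's colour, the class dominated
by a lower leaf would contain the upper leaf of another page; so one more colour is needed, at
least `n + 2 ≥ 5` in all.
-/

open SimpleGraph

open Finset

section TDColoring

variable {V : Type*} {G : SimpleGraph V} {k : ℕ} {c : V → Fin k}

theorem IsTDColoring.tdChromatic_le (hc : IsTDColoring G c) : tdChromatic G ≤ k :=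
  Nat.sInf_le ⟨c, hc⟩

theorem IsTDColoring.tdChromatic_pos [Nonempty V] (hc : IsTDColoring G c) :
    0 < tdChromatic G := by
  obtain ⟨d, -⟩ := Nat.sInf_mem (⟨k, c, hc⟩ : {k | ∃ c : V → Fin k, IsTDColoring G c}.Nonempty)
  exact (d (Classical.arbitrary V)).pos

theorem exists_isTDColoring_of_tdChromatic_pos (h : 0 < tdChromatic G) :
    ∃ c : V → Fin (tdChromatic G), IsTDColoring G c :=
  Nat.sInf_mem (Nat.nonempty_of_pos_sInf h)

theorem IsTDColoring.eq_of_color_eq_of_unique_neighbor (hc : IsTDColoring G c) {a b : V}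
    (hb : ∀ w, G.Adj b w → w = a) {w : V} (hw : c w = c a) : w = a := by
  obtain ⟨i, ⟨w₀, rfl⟩, hi⟩ := hc.2 b
  obtain rfl := hb w₀ (hi w₀ rfl)
  exact hb w (hi w hw)

theorem IsTDColoring.boxProd {m : ℕ} (hc : IsTDColoring G c) (H : SimpleGraph (Fin m)) :
    IsTDColoring (G □ H) (fun p => finProdFinEquiv (c p.1, p.2)) := by
  refine ⟨?_, ?_⟩
  · rintro ⟨u, i⟩ ⟨v, j⟩ huv heq
    simp only [EmbeddingLike.apply_eq_iff_eq, Prod.mk.injEq] at heq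
    rcases boxProd_adj.1 huv with ⟨h, -⟩ | ⟨h, -⟩
    · exact hc.1 u v h heq.1
    · exact H.ne_of_adj h heq.2
  · rintro ⟨v, j⟩
    obtain ⟨i, ⟨w₀, hw₀⟩, hi⟩ := hc.2 v
    refine ⟨finProdFinEquiv (i, j), ⟨(w₀, j), by simp [hw₀]⟩, ?_⟩
    rintro ⟨w, j'⟩ hw
    simp only [EmbeddingLike.apply_eq_iff_eq, Prod.mk.injEq] at hw
    exact boxProd_adj.2 (Or.inl ⟨hi w hw.1, hw.2.symm⟩)

end TDColoring

theorem isTDColoring_completeBipartiteGraph {V W : Type*} [Nonempty V] [Nonempty W] :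
    IsTDColoring (completeBipartiteGraph V W)
      (Sum.elim (fun _ => 0) (fun _ => 1) : V ⊕ W → Fin 2) := by
  refine ⟨?_, ?_⟩
  · rintro (u | u) (v | v) h <;> simp_all
  · rintro (v | v)
    · exact ⟨1, ⟨.inr (Classical.arbitrary W), rfl⟩, by rintro (w | w) h <;> simp_all⟩
    · exact ⟨0, ⟨.inl (Classical.arbitrary V), rfl⟩, by rintro (w | w) h <;> simp_all⟩

theorem tdStability_eq_one_of_tdChromatic_ne {V : Type*} [Fintype V] {G : SimpleGraph V} (v : V)
    (hv : tdChromatic (G.induce {w | w ∉ ({v} : Finset V)}) ≠ tdChromatic G) :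
    tdStability G = 1 :=
  le_antisymm (Nat.sInf_le ⟨{v}, card_singleton v, one_pos, hv⟩)
    (le_csInf ⟨1, {v}, card_singleton v, one_pos, hv⟩ fun _ ⟨_, _, hk, _⟩ => hk)

section BookGraph

variable {n : ℕ}

abbrev bookGraph (n : ℕ) : SimpleGraph ((Fin 1 ⊕ Fin n) × Fin 2) :=
  (completeBipartiteGraph (Fin 1) (Fin n)).boxProd (pathGraph 2)

theorem exists_isTDColoring_bookGraph [NeZero n] :
    ∃ c : _ → Fin 4, IsTDColoring (bookGraph n) c :=
  ⟨_, isTDColoring_completeBipartiteGraph.boxProd (pathGraph 2)⟩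

/-- The hubs are `(.inl 0, j)` and page `i` has the leaves `(.inr i, j)`, at level `j`. -/
abbrev upperHub (n : ℕ) : (Fin 1 ⊕ Fin n) × Fin 2 := (.inl 0, 1)

abbrev PrunedBook (n : ℕ) : Set ((Fin 1 ⊕ Fin n) × Fin 2) := {v | v ∉ ({upperHub n} : Finset _)}

def lowerHub : PrunedBook n := ⟨(.inl 0, 0), by simp⟩

def lowerLeaf (i : Fin n) : PrunedBook n := ⟨(.inr i, 0), by simp⟩

def upperLeaf (i : Fin n) : PrunedBook n := ⟨(.inr i, 1), by simp⟩

theorem PrunedBook.cases (v : PrunedBook n) :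
    v = lowerHub ∨ (∃ i, v = lowerLeaf i) ∨ ∃ i, v = upperLeaf i := by
  obtain ⟨⟨x | i, j⟩, hv⟩ := v <;> fin_cases j
  · exact .inl (Subtype.ext (by simp [lowerHub, Fin.fin_one_eq_zero x]))
  · simp [Fin.fin_one_eq_zero x] at hv
  · exact .inr (.inl ⟨i, rfl⟩)
  · exact .inr (.inr ⟨i, rfl⟩)

theorem lowerLeaf_injective : Function.Injective (lowerLeaf (n := n)) := by
  intro i j h
  simpa [lowerLeaf] using congrArg (·.1.1) h

theorem lowerHub_ne_lowerLeaf (i : Fin n) : lowerHub ≠ lowerLeaf i := by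
  simp [lowerHub, lowerLeaf]

theorem upperLeaf_ne_lowerLeaf (i j : Fin n) : upperLeaf j ≠ lowerLeaf i := by
  simp [upperLeaf, lowerLeaf]

theorem eq_lowerLeaf_of_adj_upperLeaf {i : Fin n} {v : PrunedBook n}
    (h : ((bookGraph n).induce (PrunedBook n)).Adj (upperLeaf i) v) : v = lowerLeaf i := by
  rcases PrunedBook.cases v with rfl | ⟨j, rfl⟩ | ⟨j, rfl⟩ <;>
    simp_all [lowerHub, lowerLeaf, upperLeaf, boxProd_adj]

theorem not_adj_lowerLeaf_lowerLeaf (i j : Fin n) :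
    ¬((bookGraph n).induce (PrunedBook n)).Adj (lowerLeaf i) (lowerLeaf j) := by
  simp [lowerLeaf, boxProd_adj]

theorem not_adj_lowerLeaf_upperLeaf {i j : Fin n} (hij : i ≠ j) :
    ¬((bookGraph n).induce (PrunedBook n)).Adj (lowerLeaf i) (upperLeaf j) := by
  simp [lowerLeaf, upperLeaf, boxProd_adj, hij]

theorem IsTDColoring.eq_lowerLeaf_of_color_eq {k : ℕ} {c : PrunedBook n → Fin k}
    (hc : IsTDColoring ((bookGraph n).induce (PrunedBook n)) c) {i : Fin n} {w : PrunedBook n}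
    (hw : c w = c (lowerLeaf i)) : w = lowerLeaf i :=
  hc.eq_of_color_eq_of_unique_neighbor (fun _ => eq_lowerLeaf_of_adj_upperLeaf) hw

theorem IsTDColoring.exists_upperLeaf_color_ne {k : ℕ} {c : PrunedBook n → Fin k}
    (hc : IsTDColoring ((bookGraph n).induce (PrunedBook n)) c) (hn : 2 ≤ n) :
    ∃ j, c (upperLeaf j) ≠ c lowerHub := by
  by_contra! hup
  let i₀ : Fin n := ⟨0, by omega⟩
  let i₁ : Fin n := ⟨1, hn⟩
  obtain ⟨m, ⟨w, rfl⟩, hm⟩ := hc.2 (lowerLeaf i₀)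
  have hw : c w = c lowerHub := by
    rcases PrunedBook.cases w with rfl | ⟨i, rfl⟩ | ⟨i, rfl⟩
    · rfl
    · exact absurd (hm _ rfl) (not_adj_lowerLeaf_lowerLeaf i₀ i)
    · exact hup i
  exact not_adj_lowerLeaf_upperLeaf (i := i₀) (j := i₁) (by simp [i₀, i₁, Fin.ext_iff])
    (hm _ ((hup i₁).trans hw.symm))

theorem IsTDColoring.prunedBook_add_two_le {k : ℕ} {c : PrunedBook n → Fin k}
    (hc : IsTDColoring ((bookGraph n).induce (PrunedBook n)) c) (hn : 2 ≤ n) : n + 2 ≤ k := by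
  set A := univ.image fun i => c (lowerLeaf i)
  have hA : #A = n := by
    rw [card_image_of_injective _ fun i j h => lowerLeaf_injective (hc.eq_lowerLeaf_of_color_eq h),
      card_fin]
  have hnotA : ∀ v, (∀ i, v ≠ lowerLeaf i) → c v ∉ A := by
    intro v hv hvA
    obtain ⟨i, -, hi⟩ := mem_image.1 hvA
    exact hv i (hc.eq_lowerLeaf_of_color_eq hi.symm)
  obtain ⟨j, hj⟩ := hc.exists_upperLeaf_color_ne hn
  calc n + 2 = #(insert (c (upperLeaf j)) (insert (c lowerHub) A)) := by
        rw [card_insert_of_notMem, card_insert_of_notMem (hnotA _ lowerHub_ne_lowerLeaf), hA]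
        simpa [hj] using hnotA _ (upperLeaf_ne_lowerLeaf · j)
    _ ≤ k := (card_le_univ _).trans_eq (Fintype.card_fin k)

theorem tdChromatic_prunedBook_ne (hn : 3 ≤ n) :
    tdChromatic ((bookGraph n).induce (PrunedBook n)) ≠ tdChromatic (bookGraph n) := by
  intro h
  have : NeZero n := ⟨by omega⟩
  obtain ⟨c₄, hc₄⟩ := exists_isTDColoring_bookGraph (n := n)
  obtain ⟨c, hc⟩ := exists_isTDColoring_of_tdChromatic_pos (h ▸ hc₄.tdChromatic_pos)
  have := hc.prunedBook_add_two_le (by omega)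
  have := hc₄.tdChromatic_le
  omega

end BookGraph

theorem tdStability_bookGraph (n : ℕ) (hn : 3 ≤ n) :
    tdStability ((completeBipartiteGraph (Fin 1) (Fin n)).boxProd
      (SimpleGraph.pathGraph 2)) = 1 :=
  tdStability_eq_one_of_tdChromatic_ne (upperHub n) (tdChromatic_prunedBook_ne hn)
end

section
/- For every natural number n ≥ 1, there exists a graph G with TDC-stability exactly n; in particular, the complete bipartite graph K_{n,n} satisfies St_d^t(K_{n,n}) = n. -/
open SimpleGraph

lemma tdChromatic_eq_two {V : Type*} (G : SimpleGraph V) (f : V → Bool)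
    (hadj : ∀ u v, G.Adj u v ↔ f u ≠ f v)
    (h0 : ∃ v, f v = false) (h1 : ∃ v, f v = true) :
    tdChromatic G = 2 := by
  obtain ⟨w0, hw0⟩ := h0
  obtain ⟨w1, hw1⟩ := h1
  have hmem : (2 : ℕ) ∈ {k | ∃ c : V → Fin k, IsTDColoring G c} := by
    refine ⟨fun v => if f v then 1 else 0, ?_, ?_⟩
    · intro u v huv h
      rw [hadj] at huv
      by_cases hu : f u <;> by_cases hv : f v <;> simp_all
    · intro v
      by_cases hv : f v
      · refine ⟨0, ⟨w0, by simp [hw0]⟩, ?_⟩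
        intro w hw
        rw [hadj]
        by_cases hfw : f w <;> simp_all
      · refine ⟨1, ⟨w1, by simp [hw1]⟩, ?_⟩
        intro w hw
        rw [hadj]
        by_cases hfw : f w <;> simp_all
  refine le_antisymm (Nat.sInf_le hmem) (le_csInf ⟨2, hmem⟩ ?_)
  rintro k ⟨c, hprop, hdom⟩
  by_contra h
  push_neg at h
  interval_cases k
  · exact (c w0).elim0
  · obtain ⟨i, ⟨w, hw⟩, hall⟩ := hdom w0
    exact G.irrefl (hall w0 (Subsingleton.elim _ _))

lemma tdChromatic_eq_zero {V : Type*} (G : SimpleGraph V) (hv : Nonempty V)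
    (h : ∀ u v, ¬ G.Adj u v) : tdChromatic G = 0 := by
  rw [tdChromatic, Nat.sInf_eq_zero]
  right
  ext k
  simp only [Set.mem_setOf_eq, Set.mem_empty_iff_false, iff_false]
  rintro ⟨c, _, hdom⟩
  obtain ⟨v⟩ := hv
  obtain ⟨i, ⟨w, hw⟩, hall⟩ := hdom v
  exact h v w (hall w hw)

theorem tdStability_completeBipartite (n : ℕ) (hn : 1 ≤ n) :
    tdStability (completeBipartiteGraph (Fin n) (Fin n)) = n ∧
      ∃ (V : Type) (_ : Fintype V) (G : SimpleGraph V), tdStability G = n := by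
  haveI : NeZero n := ⟨by omega⟩
  set G := completeBipartiteGraph (Fin n) (Fin n) with hGdef
  have hG2 : tdChromatic G = 2 := by
    apply tdChromatic_eq_two _ Sum.isLeft
    · rintro (u | u) (v | v) <;> simp [hGdef]
    · exact ⟨Sum.inr 0, rfl⟩
    · exact ⟨Sum.inl 0, rfl⟩
  -- key: small deletions keep tdChromatic = 2
  have key : ∀ S : Finset (Fin n ⊕ Fin n), S.card < n →
      tdChromatic (G.induce {v | v ∉ S}) = 2 := by
    intro S hS
    have hleft : ∃ a : Fin n, Sum.inl a ∉ S := by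
      by_contra h
      push_neg at h
      have hsub : (Finset.univ.image (Sum.inl : Fin n → Fin n ⊕ Fin n)) ⊆ S := by
        intro x hx
        simp only [Finset.mem_image, Finset.mem_univ, true_and] at hx
        obtain ⟨a, rfl⟩ := hx
        exact h a
      have := Finset.card_le_card hsub
      rw [Finset.card_image_of_injective _ Sum.inl_injective, Finset.card_univ,
        Fintype.card_fin] at this
      omega
    have hright : ∃ b : Fin n, Sum.inr b ∉ S := by
      by_contra h
      push_neg at h
      have hsub : (Finset.univ.image (Sum.inr : Fin n → Fin n ⊕ Fin n)) ⊆ S := by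
        intro x hx
        simp only [Finset.mem_image, Finset.mem_univ, true_and] at hx
        obtain ⟨b, rfl⟩ := hx
        exact h b
      have := Finset.card_le_card hsub
      rw [Finset.card_image_of_injective _ Sum.inr_injective, Finset.card_univ,
        Fintype.card_fin] at this
      omega
    obtain ⟨a, ha⟩ := hleft
    obtain ⟨b, hb⟩ := hright
    refine tdChromatic_eq_two (G.induce {v | v ∉ S}) (fun v => (v : Fin n ⊕ Fin n).isLeft) ?_ ?_ ?_
    · rintro ⟨(u | u), hu⟩ ⟨(v | v), hv⟩ <;> simp [hGdef, comap_adj]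
    · exact ⟨⟨Sum.inr b, hb⟩, rfl⟩
    · exact ⟨⟨Sum.inl a, ha⟩, rfl⟩
  -- S₀: the whole left side
  set S₀ : Finset (Fin n ⊕ Fin n) := Finset.univ.image Sum.inl with hS₀def
  have hS₀card : S₀.card = n := by
    rw [hS₀def, Finset.card_image_of_injective _ Sum.inl_injective, Finset.card_univ,
      Fintype.card_fin]
  have hzero : tdChromatic (G.induce {v | v ∉ S₀}) = 0 := by
    apply tdChromatic_eq_zero
    · exact ⟨⟨Sum.inr 0, by simp [hS₀def]⟩⟩
    · rintro ⟨(u | u), hu⟩ ⟨(v | v), hv⟩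
      · exact absurd (by simp [hS₀def]) hu
      · exact absurd (by simp [hS₀def]) hu
      · exact absurd (by simp [hS₀def]) hv
      · simp [hGdef, comap_adj]
  have hmemn : n ∈ {k | ∃ S : Finset (Fin n ⊕ Fin n), S.card = k ∧ 0 < k ∧
      tdChromatic (G.induce {v | v ∉ S}) ≠ tdChromatic G} :=
    ⟨S₀, hS₀card, by omega, by rw [hzero, hG2]; omega⟩
  have hst : tdStability G = n := by
    refine le_antisymm (Nat.sInf_le hmemn) (le_csInf ⟨n, hmemn⟩ ?_)
    rintro m ⟨S, hcard, hpos, hne⟩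
    by_contra h
    push_neg at h
    exact hne (by rw [key S (by omega), hG2])
  exact ⟨hst, Fin n ⊕ Fin n, inferInstance, G, hst⟩
end

section
/- For every n ≥ 2, the TDC-bondage number of the friendship graph F_n equals 1. -/
open SimpleGraph

lemma FG_adj (n : ℕ) (u v : Option (Fin n × Fin 2)) :
    (friendshipGraph n).Adj u v ↔ u ≠ v ∧ ((u = none ∨ u.map Prod.fst = v.map Prod.fst) ∨
      (v = none ∨ v.map Prod.fst = u.map Prod.fst)) := by
  simp [friendshipGraph, SimpleGraph.fromRel_adj]

lemma aux_no3 {n : ℕ} (hn : 2 ≤ n) :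
    ¬ ∃ c : Option (Fin n × Fin 2) → Fin 3,
      IsTDColoring ((friendshipGraph n).deleteEdges
        {s(none, some (⟨0, by omega⟩, 0))}) c := by
  have h0 : 0 < n := by omega
  have h1 : 1 < n := by omega
  set z : Fin n := ⟨0, by omega⟩ with hz
  set o : Fin n := ⟨1, h1⟩ with ho
  have hzo : z ≠ o := by simp [hz, ho, Fin.ext_iff]
  set G' := (friendshipGraph n).deleteEdges {s(none, some (z, 0))} with hG'
  rintro ⟨c, hprop, htd⟩
  -- only neighbor of (z,0) in G' is (z,1)
  have hnb : ∀ w, G'.Adj (some (z,0)) w → w = some (z,1) := by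
    intro w hw
    rw [hG', SimpleGraph.deleteEdges_adj] at hw
    obtain ⟨hadj, hmem⟩ := hw
    rw [FG_adj] at hadj
    obtain ⟨hne, h⟩ := hadj
    match w with
    | none =>
      exfalso; apply hmem
      simp [Sym2.eq_swap]
    | some q =>
      obtain ⟨q1, q2⟩ := q
      have h1' : q1 = z := by
        rcases h with (h | h) | (h | h)
        · exact absurd h (by simp)
        · simpa using h.symm
        · exact absurd h (by simp)
        · simpa using h
      subst h1'
      have h2 : q2 ≠ 0 := by
        intro hq2; subst hq2; exact hne rfl
      have h3 : q2 = 1 := by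
        have := q2.isLt
        have h2' : q2.val ≠ 0 := fun hh => h2 (Fin.ext hh)
        exact Fin.ext (by omega)
      rw [h3]
  -- adjacency facts in G'
  have hadjG' : ∀ p : Fin n × Fin 2, p ≠ (z, 0) → G'.Adj none (some p) := by
    intro p hp
    rw [hG', SimpleGraph.deleteEdges_adj]
    constructor
    · rw [FG_adj]; simp
    · simp only [Set.mem_singleton_iff, Sym2.eq_iff]
      push_neg
      constructor
      · rintro - h; exact hp (by simpa using h)
      · rintro h; exact absurd h (by simp)
  have hA4 : G'.Adj (some (o,0)) (some (o,1)) := by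
    rw [hG', SimpleGraph.deleteEdges_adj]
    constructor
    · rw [FG_adj]
      refine ⟨by simp [Fin.ext_iff], Or.inl (Or.inr (by simp))⟩
    · simp only [Set.mem_singleton_iff, Sym2.eq_iff]
      push_neg
      exact ⟨fun h => absurd h (by simp), fun _ => by simp⟩
  -- the TD class of (z,0) must be the singleton {(z,1)}
  obtain ⟨b, ⟨w0, hw0⟩, hb⟩ := htd (some (z,0))
  have hsing : ∀ w, c w = b → w = some (z,1) := fun w hw => hnb w (hb w hw)
  have hcb : c (some (z,1)) = b := by
    have := hsing w0 hw0; rw [← this]; exact hw0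
  -- colors
  have hba : b ≠ c none := by
    rw [← hcb]
    exact fun h => hprop _ _ (hadjG' (z,1) (by simp [Prod.ext_iff])) h.symm
  have hx : c (some (o,0)) ≠ c none :=
    fun h => hprop _ _ (hadjG' (o,0) (by simp only [ne_eq, Prod.mk.injEq]; intro hh; exact hzo hh.1.symm)) h.symm
  have hy : c (some (o,1)) ≠ c none :=
    fun h => hprop _ _ (hadjG' (o,1) (by simp [Prod.ext_iff])) h.symm
  have hxy : c (some (o,0)) ≠ c (some (o,1)) := hprop _ _ hA4
  have : c (some (o,0)) = b ∨ c (some (o,1)) = b := by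
    have v1 := (c none).isLt
    have v2 := (c (some (o,0))).isLt
    have v3 := (c (some (o,1))).isLt
    have v4 := b.isLt
    rw [Fin.ne_iff_vne] at hba hx hy hxy
    rw [Fin.ext_iff, Fin.ext_iff]
    omega
  rcases this with h | h
  · have := hsing _ h
    simp only [Option.some.injEq, Prod.mk.injEq] at this
    exact hzo this.1.symm
  · have := hsing _ h
    simp only [Option.some.injEq, Prod.mk.injEq] at this
    exact hzo this.1.symm
lemma aux_three_le {n k : ℕ} (hn : 2 ≤ n) (c : Option (Fin n × Fin 2) → Fin k)
    (hc : ∀ u v, (friendshipGraph n).Adj u v → c u ≠ c v) : 3 ≤ k := by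
  have h0 : 0 < n := by omega
  have a1 : (friendshipGraph n).Adj none (some (⟨0,h0⟩,0)) := by
    rw [FG_adj]; simp
  have a2 : (friendshipGraph n).Adj none (some (⟨0,h0⟩,1)) := by
    rw [FG_adj]; simp
  have a3 : (friendshipGraph n).Adj (some (⟨0,h0⟩,0)) (some (⟨0,h0⟩,1)) := by
    rw [FG_adj]; simp
  have h1 := hc _ _ a1
  have h2 := hc _ _ a2
  have h3 := hc _ _ a3
  have v1 := (c none).isLt
  have v2 := (c (some (⟨0,h0⟩,0))).isLt
  have v3 := (c (some (⟨0,h0⟩,1))).isLt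
  rw [Fin.ne_iff_vne] at h1 h2 h3
  omega
lemma aux_td3 {n : ℕ} (hn : 2 ≤ n) :
    ∃ c : Option (Fin n × Fin 2) → Fin 3, IsTDColoring (friendshipGraph n) c := by
  have h0 : 0 < n := by omega
  refine ⟨fun v => v.elim 0 (fun p => p.2.succ), ?_, ?_⟩
  · intro u v huv
    rw [FG_adj] at huv
    obtain ⟨hne, h⟩ := huv
    match u, v with
    | none, none => exact absurd rfl hne
    | none, some q => simpa using (Fin.succ_ne_zero q.2).symm
    | some p, none => simpa using Fin.succ_ne_zero p.2
    | some p, some q =>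
      simp only [Option.map_some, Option.some.injEq, false_or, or_false] at h
      have h1 : p.1 = q.1 := by
        rcases h with (h | h) | (h | h)
        · exact absurd h (by simp)
        · exact h
        · exact absurd h (by simp)
        · exact h.symm
      have h2 : p.2 ≠ q.2 := fun hh => hne (by rw [Prod.ext h1 hh])
      simpa using fun hh => h2 (Fin.succ_injective _ hh)
  · intro v
    match v with
    | none =>
      refine ⟨1, ⟨some (⟨0,h0⟩,0), rfl⟩, ?_⟩
      intro w hw
      match w with
      | none => simp at hw
      | some q => rw [FG_adj]; simp
    | some p =>
      refine ⟨0, ⟨none, rfl⟩, ?_⟩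
      intro w hw
      match w with
      | none => rw [FG_adj]; simp
      | some q => exact absurd hw (by simpa using Fin.succ_ne_zero q.2)
theorem tdBondage_friendshipGraph (n : ℕ) (hn : 2 ≤ n) :
    tdBondage (friendshipGraph n) = 1 := by
  have h0 : 0 < n := by omega
  set e : Sym2 (Option (Fin n × Fin 2)) := s(none, some (⟨0, by omega⟩, 0)) with he
  set F : Finset (Sym2 (Option (Fin n × Fin 2))) := {e} with hF
  -- χᵗd(F n) = 3
  have hchromG : tdChromatic (friendshipGraph n) = 3 := by
    unfold tdChromatic
    obtain ⟨c, hc⟩ := aux_td3 hn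
    have h3 : 3 ∈ {k | ∃ c : Option (Fin n × Fin 2) → Fin k,
        IsTDColoring (friendshipGraph n) c} := ⟨c, hc⟩
    refine le_antisymm (Nat.sInf_le h3) (le_csInf ⟨3, h3⟩ ?_)
    rintro k ⟨c', hc1, -⟩
    exact aux_three_le hn c' hc1
  have hFsub : ↑F ⊆ (friendshipGraph n).edgeSet := by
    rw [hF]
    intro x hx
    simp only [Finset.coe_singleton, Set.mem_singleton_iff] at hx
    subst hx
    rw [he, SimpleGraph.mem_edgeSet, FG_adj]
    simp
  have hdiff : tdChromatic ((friendshipGraph n).deleteEdges ↑F) ≠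
      tdChromatic (friendshipGraph n) := by
    rw [hchromG]
    intro h
    have hcoe : (↑F : Set (Sym2 (Option (Fin n × Fin 2)))) = {e} := by
      rw [hF]; exact Finset.coe_singleton e
    unfold tdChromatic at h
    rcases Set.eq_empty_or_nonempty {k | ∃ c : Option (Fin n × Fin 2) → Fin k,
        IsTDColoring ((friendshipGraph n).deleteEdges ↑F) c} with hemp | hne
    · rw [hemp, Nat.sInf_empty] at h
      exact absurd h (by norm_num)
    · have hmem := Nat.sInf_mem hne
      rw [h] at hmem
      obtain ⟨c, hc⟩ := hmem
      exact aux_no3 hn ⟨c, by rw [← he, ← hcoe]; exact hc⟩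
  have h1 : 1 ∈ {k | ∃ F' : Finset (Sym2 (Option (Fin n × Fin 2))),
      ↑F' ⊆ (friendshipGraph n).edgeSet ∧ F'.card = k ∧ 0 < k ∧
      tdChromatic ((friendshipGraph n).deleteEdges ↑F') ≠
        tdChromatic (friendshipGraph n)} :=
    ⟨F, hFsub, Finset.card_singleton e, one_pos, hdiff⟩
  unfold tdBondage
  refine le_antisymm (Nat.sInf_le h1) ?_
  have hmem := Nat.sInf_mem ⟨1, h1⟩
  obtain ⟨F', -, -, hpos, -⟩ := hmem
  exact hpos
end
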